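/- arXiv:1507.06111 — 6 statements merged into one kernel-verified Lean document; each statement's English description precedes it below -/
import Mathlib

section
/- Every semisimple COM is uniquely determined by its set of topes: if (E,L) and (E,L') are semisimple COMs with the same set of topes, then L = L'. -/
/-- Composition of sign vectors: `(X ∘ Y) e = X e` if `X e ≠ 0`, else `Y e`. -/
def scomp {E : Type*} (X Y : E → SignType) : E → SignType :=
  fun e => if X e = 0 then Y e else X e

/-- The sign ordering: `0` below `+1` and `-1`, componentwise. -/
def sle {E : Type*} (X Y : E → SignType) : Prop :=
  ∀ e, X e = 0 ∨ X e = Y e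

/-- The separator of two sign vectors. -/
def sep {E : Type*} (X Y : E → SignType) : Set E :=
  {e | X e * Y e = -1}

/-- The support of a sign vector. -/
def support {E : Type*} (X : E → SignType) : Set E := {e | X e ≠ 0}

/-- Axiom (C): closure under composition. -/
def CompClosed {E : Type*} (L : Set (E → SignType)) : Prop :=
  ∀ X ∈ L, ∀ Y ∈ L, scomp X Y ∈ L

/-- Axiom (FS): face symmetry. -/
def FS {E : Type*} (L : Set (E → SignType)) : Prop :=
  ∀ X ∈ L, ∀ Y ∈ L, scomp X (fun e => -(Y e)) ∈ L

/-- Axiom (SE): strong elimination. -/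
def SE {E : Type*} (L : Set (E → SignType)) : Prop :=
  ∀ X ∈ L, ∀ Y ∈ L, ∀ e ∈ sep X Y,
    ∃ Z ∈ L, Z e = 0 ∧ ∀ f ∉ sep X Y, Z f = scomp X Y f

/-- A conditional oriented matroid. -/
def IsCOM {E : Type*} (L : Set (E → SignType)) : Prop :=
  L.Nonempty ∧ FS L ∧ SE L

/-- A tope: a maximal covector in the sign ordering. -/
def IsTope {E : Type*} (L : Set (E → SignType)) (X : E → SignType) : Prop :=
  X ∈ L ∧ ∀ Y ∈ L, sle X Y → Y = X

/-- The coordinates at which `L` is not nonzero-constant. -/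
def Epm {E : Type*} (L : Set (E → SignType)) : Set E :=
  {e | ¬ (∀ X ∈ L, X e = 1) ∧ ¬ (∀ X ∈ L, X e = -1)}

/-- Semisimplicity: restricted non-redundancy (RN1*) and (RN2*). -/
def Semisimple {E : Type*} (L : Set (E → SignType)) : Prop :=
  (∀ e ∈ Epm L, (∃ X ∈ L, X e = 1) ∧ (∃ X ∈ L, X e = -1) ∧ (∃ X ∈ L, X e = 0)) ∧
  (∀ e ∈ Epm L, ∀ f ∈ Epm L, e ≠ f →
    ∃ X ∈ L, ∃ Y ∈ L, X e * X f = 1 ∧ Y e * Y f = -1)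

/-- The upset of a set of sign vectors in the sign ordering. -/
def upset {E : Type*} (L : Set (E → SignType)) : Set (E → SignType) :=
  {Y | ∃ X ∈ L, sle X Y}

/-!
Take a covector `X` of `L` and contract the zero set of `X` one coordinate at a time; the
contractions of `L` and `L'` keep having the same topes, and `X` is a tope of the last contraction
of `L`, hence a covector of `L'`.

For a single coordinate `a`, a tope `P` of `L / a` is transported by composition. If `N` is a tope
of `L' / a`, then `P ∘ N` is a tope of `L' / a`: strong elimination at `a` between the topes
`P ∘ N ∘ M` and `P ∘ N ∘ (-M)`, for a tope `M` with `M a ≠ 0`, yields exactly `P ∘ N`. Symmetrically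
`N ∘ P` is a tope of `L / a`, so the support of `N` lies in that of `P`, and `P ∘ N = P`.
-/

section SignVectors

variable {E : Type*}

theorem scomp_apply_eq_zero {X Y : E → SignType} {e : E} :
    scomp X Y e = 0 ↔ X e = 0 ∧ Y e = 0 := by
  by_cases hX : X e = 0 <;> simp [scomp, hX]

theorem scomp_assoc (X Y Z : E → SignType) : scomp (scomp X Y) Z = scomp X (scomp Y Z) := by
  funext e
  by_cases hX : X e = 0 <;> simp [scomp, hX]

theorem support_scomp (X Y : E → SignType) : support (scomp X Y) = support X ∪ support Y := by
  ext e
  simp only [support, Set.mem_ofPred_eq, Set.mem_union, ne_eq, scomp_apply_eq_zero, not_and_or]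

theorem support_neg (X : E → SignType) : support (-X) = support X := by
  ext e
  simp [support]

theorem scomp_eq_left {X Y : E → SignType} (h : support Y ⊆ support X) : scomp X Y = X := by
  funext e
  by_cases hX : X e = 0
  · have hY : Y e = 0 := not_not.1 fun hY => h hY hX
    simp [scomp, hX, hY]
  · simp [scomp, hX]

theorem sle_scomp (X Y : E → SignType) : sle X (scomp X Y) := fun e => by
  by_cases hX : X e = 0 <;> simp [scomp, hX]

theorem FS.compClosed {K : Set (E → SignType)} (hFS : FS K) : CompClosed K := by
  intro X hX Y hY
  convert hFS X hX _ (hFS X hX Y hY) using 1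
  funext e
  by_cases hX : X e = 0 <;> simp [scomp, hX]

/-- `V ∘ M` and `V ∘ (-M)` are separated exactly where `V` vanishes and `M` does not. -/
theorem SE.exists_eq_on_of_scomp_neg {K : Set (E → SignType)} (hSE : SE K)
    {V M : E → SignType} {a : E} (hVa : V a = 0) (hMa : M a ≠ 0)
    (h₁ : scomp V M ∈ K) (h₂ : scomp V (-M) ∈ K) :
    ∃ Z ∈ K, Z a = 0 ∧ ∀ e, V e ≠ 0 ∨ M e = 0 → Z e = V e := by
  have hsep : ∀ e, e ∈ sep (scomp V M) (scomp V (-M)) ↔ V e = 0 ∧ M e ≠ 0 := fun e => by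
    have key : ∀ s t : SignType,
        (if s = 0 then t else s) * (if s = 0 then -t else s) = -1 ↔ s = 0 ∧ t ≠ 0 := by decide
    exact key (V e) (M e)
  obtain ⟨Z, hZ, hZa, hZf⟩ := hSE _ h₁ _ h₂ a ((hsep a).2 ⟨hVa, hMa⟩)
  refine ⟨Z, hZ, hZa, fun e he => ?_⟩
  rw [hZf e fun h => by simp_all [hsep e]]
  rcases he with hV | hM
  · simp [scomp, hV]
  · by_cases hV : V e = 0 <;> simp [scomp, hV, hM]

section Topes

variable {K : Set (E → SignType)}

theorem isTope_iff_support_subset (hC : CompClosed K) {T : E → SignType} :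
    IsTope K T ↔ T ∈ K ∧ ∀ Y ∈ K, support Y ⊆ support T := by
  constructor
  · rintro ⟨hT, hmax⟩
    refine ⟨hT, fun Y hY => ?_⟩
    have hTY : scomp T Y = T := hmax _ (hC T hT Y hY) (sle_scomp T Y)
    calc support Y ⊆ support T ∪ support Y := Set.subset_union_right
      _ = support T := by rw [← support_scomp, hTY]
  · rintro ⟨hT, hsub⟩
    refine ⟨hT, fun Y hY hle => funext fun e => ?_⟩
    rcases hle e with h0 | h
    · rw [h0]
      by_contra hYe
      exact hsub Y hY hYe h0
    · exact h.symm

theorem IsTope.of_support_subset (hC : CompClosed K) {T Z : E → SignType} (hT : IsTope K T)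
    (hZ : Z ∈ K) (h : support T ⊆ support Z) : IsTope K Z :=
  (isTope_iff_support_subset hC).2
    ⟨hZ, fun Y hY => (((isTope_iff_support_subset hC).1 hT).2 Y hY).trans h⟩

theorem IsTope.scomp_left (hC : CompClosed K) {T X : E → SignType} (hT : IsTope K T)
    (hX : X ∈ K) : IsTope K (scomp X T) :=
  hT.of_support_subset hC (hC X hX T hT.1) (by rw [support_scomp]; exact Set.subset_union_right)

theorem IsTope.scomp_neg_left (hFS : FS K) {T X : E → SignType} (hT : IsTope K T)
    (hX : X ∈ K) : IsTope K (scomp X (-T)) :=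
  hT.of_support_subset hFS.compClosed (hFS X hX T hT.1)
    (by rw [support_scomp, support_neg]; exact Set.subset_union_right)

theorem exists_isTope [Finite E] (hC : CompClosed K) (hne : K.Nonempty) : ∃ T, IsTope K T := by
  obtain ⟨T, hT, hmax⟩ := K.toFinite.exists_maximalFor support K hne
  refine ⟨T, (isTope_iff_support_subset hC).2 ⟨hT, fun Y hY => ?_⟩⟩
  have h := hmax (hC T hT Y hY) (by rw [support_scomp]; exact Set.subset_union_left)
  rw [support_scomp] at h
  exact Set.subset_union_right.trans h

theorem exists_isTope_apply_ne_zero [Finite E] (hC : CompClosed K) {P : E → SignType}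
    (hP : P ∈ K) {a : E} (hPa : P a ≠ 0) : ∃ T, IsTope K T ∧ T a ≠ 0 := by
  obtain ⟨T, hT⟩ := exists_isTope hC ⟨P, hP⟩
  exact ⟨T, hT, ((isTope_iff_support_subset hC).1 hT).2 P hP hPa⟩

end Topes

/-- The contraction `K / A`, keeping the contracted coordinates (on which it vanishes). -/
def contraction (K : Set (E → SignType)) (A : Set E) : Set (E → SignType) :=
  {Y | Y ∈ K ∧ ∀ e ∈ A, Y e = 0}

section Contraction

variable {K : Set (E → SignType)}

@[simp]
theorem mem_contraction_singleton {a : E} {Y : E → SignType} :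
    Y ∈ contraction K {a} ↔ Y ∈ K ∧ Y a = 0 := by
  simp [contraction]

theorem contraction_empty : contraction K ∅ = K := by
  simp [contraction]

theorem contraction_insert (a : E) (A : Set E) :
    contraction K (insert a A) = contraction (contraction K A) {a} := by
  ext Y
  simp only [contraction, Set.mem_insert_iff, Set.mem_singleton_iff, forall_eq_or_imp,
    forall_eq, Set.mem_ofPred_eq]
  tauto

theorem FS.contraction (hFS : FS K) (A : Set E) : FS (contraction K A) := by
  rintro X ⟨hX, hX0⟩ Y ⟨hY, hY0⟩
  exact ⟨hFS X hX Y hY, fun e he => by simp [scomp, hX0 e he, hY0 e he]⟩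

theorem SE.contraction (hSE : SE K) (A : Set E) : SE (contraction K A) := by
  rintro X ⟨hX, hX0⟩ Y ⟨hY, hY0⟩ e he
  obtain ⟨Z, hZ, hZe, hZf⟩ := hSE X hX Y hY e he
  refine ⟨Z, ⟨hZ, fun f hf => ?_⟩, hZe, hZf⟩
  rw [hZf f (by simp [sep, hX0 f hf])]
  simp [scomp, hX0 f hf, hY0 f hf]

theorem isTope_contraction_scomp [Finite E] (hFS : FS K) (hSE : SE K) {a : E} {Y : E → SignType}
    (hYa : Y a = 0) (hY : ∀ M, IsTope K M → IsTope K (scomp Y M)) {N : E → SignType}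
    (hN : IsTope (contraction K {a}) N) : IsTope (contraction K {a}) (scomp Y N) := by
  have hC := hFS.compClosed
  have hCa := (hFS.contraction {a}).compClosed
  obtain ⟨hNK, hNa⟩ := mem_contraction_singleton.1 hN.1
  by_cases h : ∀ P ∈ K, P a = 0
  · have hK : contraction K {a} = K := Set.ext fun P => by simpa using h P
    rw [hK] at hN ⊢
    exact hY N hN
  push Not at h
  obtain ⟨P, hP, hPa⟩ := h
  obtain ⟨M, hM, hMa⟩ := exists_isTope_apply_ne_zero hC hP hPa
  have h₁ : scomp (scomp Y N) M ∈ K := by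
    rw [scomp_assoc]; exact (hY _ (hM.scomp_left hC hNK)).1
  have h₂ : scomp (scomp Y N) (-M) ∈ K := by
    rw [scomp_assoc]; exact (hY _ (hM.scomp_neg_left hFS hNK)).1
  obtain ⟨Z, hZ, hZa, hZV⟩ :=
    hSE.exists_eq_on_of_scomp_neg (scomp_apply_eq_zero.2 ⟨hYa, hNa⟩) hMa h₁ h₂
  have hZc : Z ∈ contraction K {a} := mem_contraction_singleton.2 ⟨hZ, hZa⟩
  have hZN : support Z ⊆ support N := ((isTope_iff_support_subset hCa).1 hN).2 Z hZc
  have hZeq : Z = scomp Y N := funext fun e => by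
    by_cases he : scomp Y N e ≠ 0 ∨ M e = 0
    · exact hZV e he
    · push Not at he
      rw [he.1]
      by_contra hZe
      exact hZN hZe (scomp_apply_eq_zero.1 he.1).2
  rw [← hZeq]
  exact hN.of_support_subset hCa hZc (by rw [hZeq, support_scomp]; exact Set.subset_union_right)

end Contraction

section SameTopes

variable [Finite E] {K₁ K₂ : Set (E → SignType)}

theorem contraction_nonempty_of_isTope_iff (hFS₁ : FS K₁) (hFS₂ : FS K₂) (hSE₂ : SE K₂)
    (hT : ∀ M, IsTope K₁ M ↔ IsTope K₂ M) {X : E → SignType} (hX : X ∈ K₁) {a : E}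
    (hXa : X a = 0) : (contraction K₂ {a}).Nonempty := by
  have hC₁ := hFS₁.compClosed
  by_cases h : ∀ P ∈ K₂, P a = 0
  · obtain ⟨T, hT₁⟩ := exists_isTope hC₁ ⟨X, hX⟩
    have hT₂ := ((hT T).1 hT₁).1
    exact ⟨T, mem_contraction_singleton.2 ⟨hT₂, h T hT₂⟩⟩
  push Not at h
  obtain ⟨P, hP, hPa⟩ := h
  obtain ⟨M, hM, hMa⟩ := exists_isTope_apply_ne_zero hFS₂.compClosed hP hPa
  have hM₁ := (hT M).2 hM
  obtain ⟨Z, hZ, hZa, -⟩ := hSE₂.exists_eq_on_of_scomp_neg hXa hMa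
    ((hT _).1 (hM₁.scomp_left hC₁ hX)).1 ((hT _).1 (hM₁.scomp_neg_left hFS₁ hX)).1
  exact ⟨Z, mem_contraction_singleton.2 ⟨hZ, hZa⟩⟩

theorem IsTope.contraction_of_isTope_iff (hFS₁ : FS K₁) (hSE₁ : SE K₁) (hFS₂ : FS K₂)
    (hSE₂ : SE K₂) (hT : ∀ M, IsTope K₁ M ↔ IsTope K₂ M) {a : E}
    (hne : (contraction K₂ {a}).Nonempty) {P : E → SignType}
    (hP : IsTope (contraction K₁ {a}) P) : IsTope (contraction K₂ {a}) P := by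
  obtain ⟨N, hN⟩ := exists_isTope (hFS₂.contraction {a}).compClosed hne
  obtain ⟨hPK, hPa⟩ := mem_contraction_singleton.1 hP.1
  obtain ⟨hNK, hNa⟩ := mem_contraction_singleton.1 hN.1
  have hPN : IsTope (contraction K₂ {a}) (scomp P N) :=
    isTope_contraction_scomp hFS₂ hSE₂ hPa
      (fun M hM => (hT _).1 (((hT M).2 hM).scomp_left hFS₁.compClosed hPK)) hN
  have hNP : IsTope (contraction K₁ {a}) (scomp N P) :=
    isTope_contraction_scomp hFS₁ hSE₁ hNa
      (fun M hM => (hT _).2 (((hT M).1 hM).scomp_left hFS₂.compClosed hNK)) hP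
  have hNP_sub := ((isTope_iff_support_subset (hFS₁.contraction {a}).compClosed).1 hP).2 _ hNP.1
  rw [support_scomp] at hNP_sub
  rwa [scomp_eq_left (Set.subset_union_left.trans hNP_sub)] at hPN

theorem isTope_contraction_iff_of_isTope_iff (hFS₁ : FS K₁) (hSE₁ : SE K₁) (hFS₂ : FS K₂)
    (hSE₂ : SE K₂) (hT : ∀ M, IsTope K₁ M ↔ IsTope K₂ M) {X : E → SignType} (hX : X ∈ K₁)
    {a : E} (hXa : X a = 0) (M : E → SignType) :
    IsTope (contraction K₁ {a}) M ↔ IsTope (contraction K₂ {a}) M :=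
  ⟨IsTope.contraction_of_isTope_iff hFS₁ hSE₁ hFS₂ hSE₂ hT
      (contraction_nonempty_of_isTope_iff hFS₁ hFS₂ hSE₂ hT hX hXa),
    IsTope.contraction_of_isTope_iff hFS₂ hSE₂ hFS₁ hSE₁ (fun M => (hT M).symm)
      ⟨X, mem_contraction_singleton.2 ⟨hX, hXa⟩⟩⟩

theorem subset_of_isTope_iff (hFS₁ : FS K₁) (hSE₁ : SE K₁) (hFS₂ : FS K₂) (hSE₂ : SE K₂)
    (hT : ∀ M, IsTope K₁ M ↔ IsTope K₂ M) : K₁ ⊆ K₂ := by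
  classical
  intro X hX
  have hstep : ∀ S : Finset E, (∀ e ∈ S, X e = 0) →
      ∀ M, IsTope (contraction K₁ S) M ↔ IsTope (contraction K₂ S) M := by
    intro S
    induction S using Finset.induction_on with
    | empty => simpa [contraction_empty] using hT
    | insert a S _ ih =>
      intro hS
      have hS' : ∀ e ∈ S, X e = 0 := fun e he => hS e (Finset.mem_insert_of_mem he)
      rw [Finset.coe_insert, contraction_insert, contraction_insert]
      exact isTope_contraction_iff_of_isTope_iff (hFS₁.contraction _) (hSE₁.contraction _)
        (hFS₂.contraction _) (hSE₂.contraction _) (ih hS') ⟨hX, hS'⟩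
        (hS a (Finset.mem_insert_self a S))
  have hfin := Set.toFinite {e | X e = 0}
  have hXT : IsTope (contraction K₁ hfin.toFinset) X := by
    rw [hfin.coe_toFinset]
    refine (isTope_iff_support_subset (hFS₁.contraction _).compClosed).2
      ⟨⟨hX, fun e he => he⟩, fun Y hY e hYe hXe => hYe (hY.2 e hXe)⟩
  exact (((hstep _ (by simp)) X).1 hXT).1.1

end SameTopes

end SignVectors

theorem semisimple_COM_determined_by_topes_general {E : Type*} [Fintype E]
    (L L' : Set (E → SignType))
    (hL : IsCOM L) (hL' : IsCOM L')
    (htopes : {X | IsTope L X} = {X | IsTope L' X}) : L = L' := by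
  have hT : ∀ M, IsTope L M ↔ IsTope L' M := Set.ext_iff.1 htopes
  exact (subset_of_isTope_iff hL.2.1 hL.2.2 hL'.2.1 hL'.2.2 hT).antisymm
    (subset_of_isTope_iff hL'.2.1 hL'.2.2 hL.2.1 hL.2.2 fun M => (hT M).symm)

/-- a semisimple COM is determined by its set of topes. -/
theorem semisimple_COM_determined_by_topes {E : Type*} [Fintype E]
    (L L' : Set (E → SignType))
    (hL : IsCOM L) (hL' : IsCOM L') (hsL : Semisimple L) (hsL' : Semisimple L')
    (htopes : {X | IsTope L X} = {X | IsTope L' X}) : L = L' :=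
  semisimple_COM_determined_by_topes_general L L' hL hL' htopes
end

section
/- The tope graph of a semisimple strong elimination system is a partial cube: any two topes X, Y can be connected in the tope graph by a path of length #S(X,Y), so the graph distance between topes equals their Hamming distance. -/
section Aux

private lemma sg1 : ∀ a b : SignType, a ≠ 0 → b ≠ 0 → (a * b = -1 ↔ a ≠ b) := by decide
private lemma sg2 : ∀ a b s : SignType, a * b = -1 → s ≠ 0 → s = a ∨ s = b := by decide
private lemma sg4 : ∀ a b x y : SignType, a ≠ 0 → b ≠ 0 → x ≠ 0 → y ≠ 0 → x * y = -(a * b) →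
    ((x ≠ a ∧ y = b) ∨ (x = a ∧ y ≠ b)) := by decide
private lemma sg5 : ∀ a b c d : SignType, a ≠ 0 → b ≠ 0 → c * d = -(a * b) → c ≠ 0 ∧ d ≠ 0 := by
  decide
private lemma sg6 : ∀ a b m : SignType, a ≠ 0 → b ≠ 0 → (m = a ∨ m = b) →
    ((m * b = -1) ↔ (a * b = -1 ∧ ¬(a * m = -1))) := by decide
private lemma sg7 : ∀ a b m : SignType, a ≠ 0 → (m = a ∨ m = b) → a * m = -1 → a * b = -1 := by
  decide
private lemma sgp : ∀ a b : SignType, a ≠ 0 → b ≠ 0 → a * b = 1 ∨ a * b = -1 := by decide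

private lemma scomp_pos {E : Type*} (A B : E → SignType) {t : E} (h : A t ≠ 0) :
    scomp A B t = A t := if_neg h

private lemma scomp_zero {E : Type*} (A B : E → SignType) {t : E} (h : A t = 0) :
    scomp A B t = B t := if_pos h

variable {E : Type*}

/-- In a semisimple composition-closed system, every tope has full support. -/
private lemma tope_full {L : Set (E → SignType)} (hC : CompClosed L) (hss : Semisimple L)
    {X : E → SignType} (hX : IsTope L X) : ∀ e, X e ≠ 0 := by
  intro e h0
  by_cases he : e ∈ Epm L
  · obtain ⟨⟨W, hWL, hW1⟩, -, -⟩ := hss.1 e he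
    have hmem := hC X hX.1 W hWL
    have hle : sle X (scomp X W) := by
      intro f
      by_cases hf : X f = 0
      · exact Or.inl hf
      · exact Or.inr (by simp [scomp, hf])
    have heq := hX.2 _ hmem hle
    have hval : scomp X W e = W e := by simp [scomp, h0]
    rw [heq, h0, hW1] at hval
    exact absurd hval (by decide)
  · simp only [Epm, Set.mem_setOf_eq, not_and_or, not_not] at he
    rcases he with h | h
    · rw [h X hX.1] at h0; exact absurd h0 (by decide)
    · rw [h X hX.1] at h0; exact absurd h0 (by decide)

/-- A covector with full support is a tope. -/
private lemma full_tope {L : Set (E → SignType)} {M : E → SignType} (hM : M ∈ L)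
    (hfull : ∀ e, M e ≠ 0) : IsTope L M := by
  refine ⟨hM, fun W _ hle => funext fun e => ?_⟩
  rcases hle e with h | h
  · exact absurd h (hfull e)
  · exact h.symm

/-- Midpoint lemma: between two topes whose separator contains two distinct elements
there is a tope strictly between them. -/
private lemma midTope {L : Set (E → SignType)} (hC : CompClosed L) (hSE : SE L)
    (hss : Semisimple L) {X Y : E → SignType} (hX : IsTope L X) (hY : IsTope L Y)
    (hXs : ∀ g, X g ≠ 0) (hYs : ∀ g, Y g ≠ 0)
    {e f : E} (hef : e ≠ f) (he : X e * Y e = -1) (hf : X f * Y f = -1) :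
    ∃ M ∈ L, (∀ g, M g = X g ∨ M g = Y g) ∧
      (∃ g, X g * Y g = -1 ∧ M g ≠ X g) ∧ (∃ g, X g * Y g = -1 ∧ M g = X g) := by
  obtain ⟨Z, hZL, hZe, hZout⟩ := hSE X hX.1 Y hY.1 e he
  have hZout' : ∀ g, ¬ X g * Y g = -1 → Z g = X g := by
    intro g hg
    have := hZout g hg
    rwa [scomp, if_neg (hXs g)] at this
  have hne : ∀ g, X g * Y g = -1 → X g ≠ Y g := fun g hg => (sg1 _ _ (hXs g) (hYs g)).mp hg
  by_cases h1 : ∃ g, X g * Y g = -1 ∧ Z g = X g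
  · obtain ⟨g, hg, hZg⟩ := h1
    have hzg : Z g ≠ 0 := hZg ▸ hXs g
    refine ⟨scomp Z Y, hC Z hZL Y hY.1, ?_, ⟨e, he, ?_⟩, ⟨g, hg, ?_⟩⟩
    · intro t
      by_cases hzt : Z t = 0
      · exact Or.inr (scomp_zero Z Y hzt)
      · by_cases hst : X t * Y t = -1
        · rw [scomp_pos Z Y hzt]
          exact sg2 _ _ _ hst hzt
        · exact Or.inl ((scomp_pos Z Y hzt).trans (hZout' t hst))
    · rw [scomp_zero Z Y hZe]
      exact (hne e he).symm
    · rw [scomp_pos Z Y hzg, hZg]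
  · by_cases h2 : ∃ g, X g * Y g = -1 ∧ Z g ≠ 0
    · obtain ⟨g, hg, hzg⟩ := h2
      have hZgY : Z g = Y g := by
        rcases sg2 _ _ _ hg hzg with h | h
        · exact absurd ⟨g, hg, h⟩ h1
        · exact h
      refine ⟨scomp Z X, hC Z hZL X hX.1, ?_, ⟨g, hg, ?_⟩, ⟨e, he, ?_⟩⟩
      · intro t
        by_cases hzt : Z t = 0
        · exact Or.inl (scomp_zero Z X hzt)
        · by_cases hst : X t * Y t = -1
          · rw [scomp_pos Z X hzt]
            exact sg2 _ _ _ hst hzt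
          · exact Or.inl ((scomp_pos Z X hzt).trans (hZout' t hst))
      · rw [scomp_pos Z X hzg, hZgY]
        exact (hne g hg).symm
      · exact scomp_zero Z X hZe
    · push_neg at h2
      have hZ0 : ∀ g, X g * Y g = -1 → Z g = 0 := h2
      have hEpm : ∀ g, X g * Y g = -1 → g ∈ Epm L := by
        intro g hg
        constructor
        · intro hall
          rw [hall X hX.1, hall Y hY.1] at hg
          exact absurd hg (by decide)
        · intro hall
          rw [hall X hX.1, hall Y hY.1] at hg
          exact absurd hg (by decide)
      obtain ⟨Pp, hPpL, Q, hQL, hPp, hQ⟩ := hss.2 e (hEpm e he) f (hEpm f hf) hef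
      have hCC : ∃ C ∈ L, C e * C f = -(X e * X f) := by
        rcases sgp (X e) (X f) (hXs e) (hXs f) with h | h
        · refine ⟨Q, hQL, ?_⟩
          rw [h, hQ]
        · refine ⟨Pp, hPpL, ?_⟩
          rw [h, hPp]
          decide
      obtain ⟨C, hCL, hCef⟩ := hCC
      obtain ⟨hCe0, hCf0⟩ := sg5 _ _ _ _ (hXs e) (hXs f) hCef
      have hRL : scomp Z C ∈ L := hC Z hZL C hCL
      set R := scomp Z C with hR
      have hRe : R e = C e := scomp_zero Z C (hZ0 e he)
      have hRf : R f = C f := scomp_zero Z C (hZ0 f hf)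
      have hRe0 : R e ≠ 0 := by rw [hRe]; exact hCe0
      have hRf0 : R f ≠ 0 := by rw [hRf]; exact hCf0
      refine ⟨scomp R X, hC R hRL X hX.1, ?_, ?_, ?_⟩
      · intro t
        by_cases hrt : R t = 0
        · exact Or.inl (scomp_zero R X hrt)
        · by_cases hst : X t * Y t = -1
          · rw [scomp_pos R X hrt]
            exact sg2 _ _ _ hst hrt
          · have hzx : R t = X t := by
              rw [hR]
              rw [scomp_pos Z C (by rw [hZout' t hst]; exact hXs t)]
              exact hZout' t hst
            exact Or.inl ((scomp_pos R X hrt).trans hzx)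
      all_goals {
        have hMe : scomp R X e = C e := (scomp_pos R X hRe0).trans hRe
        have hMf : scomp R X f = C f := (scomp_pos R X hRf0).trans hRf
        rcases sg4 (X e) (X f) (C e) (C f) (hXs e) (hXs f) hCe0 hCf0 hCef with
          ⟨hne', heq'⟩ | ⟨heq', hne'⟩
        · first
            | exact ⟨e, he, by rw [hMe]; exact hne'⟩
            | exact ⟨f, hf, by rw [hMf]; exact heq'⟩
        · first
            | exact ⟨f, hf, by rw [hMf]; exact hne'⟩
            | exact ⟨e, he, by rw [hMe]; exact heq'⟩
      }

/-- Concatenation of two finite paths. -/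
private lemma concat {α : Type*} (P₁ P₂ : ℕ → α) (a b : ℕ) (h : P₁ a = P₂ 0) :
    ∃ P : ℕ → α, (∀ i ≤ a, P i = P₁ i) ∧ (∀ j ≤ b, P (a + j) = P₂ j) := by
  refine ⟨fun i => if i ≤ a then P₁ i else P₂ (i - a), fun i hi => if_pos hi, fun j hj => ?_⟩
  show (if a + j ≤ a then P₁ (a + j) else P₂ (a + j - a)) = P₂ j
  by_cases hj0 : j = 0
  · subst hj0
    simpa using h
  · rw [if_neg (by omega)]
    congr 1
    omega

/-- The key induction: paths between topes of any given separator size. -/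
private lemma key {E : Type*} [Fintype E] [DecidableEq E]
    (L : Set (E → SignType)) (hC : CompClosed L) (hSE : SE L) (hss : Semisimple L) :
    ∀ n : ℕ, ∀ X Y : E → SignType, IsTope L X → IsTope L Y →
      (Finset.univ.filter fun e => X e * Y e = -1).card = n →
      ∃ P : ℕ → (E → SignType),
        P 0 = X ∧ P n = Y ∧ (∀ i ≤ n, IsTope L (P i)) ∧
        (∀ i < n, (Finset.univ.filter fun e => P i e ≠ P (i + 1) e).card = 1) := by
  intro n
  induction n using Nat.strong_induction_on with
  | _ n IH =>
  intro X Y hX hY hcard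
  have hXs := tope_full hC hss hX
  have hYs := tope_full hC hss hY
  match n, hcard with
  | 0, hcard =>
    have hempty := Finset.card_eq_zero.mp hcard
    have hXY : X = Y := by
      funext g
      have hg : ¬ (X g * Y g = -1) := by
        intro h
        have : g ∈ (Finset.univ.filter fun e => X e * Y e = -1) :=
          Finset.mem_filter.mpr ⟨Finset.mem_univ g, h⟩
        rw [hempty] at this
        exact absurd this (Finset.notMem_empty g)
      by_contra hne
      exact hg ((sg1 _ _ (hXs g) (hYs g)).mpr hne)
    exact ⟨fun _ => X, rfl, hXY ▸ rfl, fun i _ => hX, fun i hi => absurd hi (by omega)⟩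
  | 1, hcard =>
    have hfe : (Finset.univ.filter fun g => X g ≠ Y g).card = 1 := by
      have hfeq : (Finset.univ.filter fun g => X g ≠ Y g) =
          (Finset.univ.filter fun g => X g * Y g = -1) := by
        apply Finset.filter_congr
        intro g _
        exact ⟨fun h => (sg1 _ _ (hXs g) (hYs g)).mpr h,
          fun h => (sg1 _ _ (hXs g) (hYs g)).mp h⟩
      rw [hfeq, hcard]
    refine ⟨fun i => if i = 0 then X else Y, by simp, by simp, ?_, ?_⟩
    · intro i _
      by_cases hi : i = 0 <;> simp [hi, hX, hY]
    · intro i hi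
      have hi0 : i = 0 := by omega
      subst hi0
      simpa using hfe
  | (m + 2), hcard =>
    have h2 : 1 < (Finset.univ.filter fun e => X e * Y e = -1).card := by omega
    obtain ⟨e, heM, f, hfM, hef⟩ := Finset.one_lt_card.mp h2
    have he : X e * Y e = -1 := (Finset.mem_filter.mp heM).2
    have hf : X f * Y f = -1 := (Finset.mem_filter.mp hfM).2
    obtain ⟨M, hML, hMXY, ⟨g₁, hg₁s, hg₁⟩, ⟨g₂, hg₂s, hg₂⟩⟩ :=
      midTope hC hSE hss hX hY hXs hYs hef he hf
    have hMs : ∀ g, M g ≠ 0 := by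
      intro g
      rcases hMXY g with h | h
      · rw [h]; exact hXs g
      · rw [h]; exact hYs g
    have hM : IsTope L M := full_tope hML hMs
    set s1 := Finset.univ.filter fun g => X g * M g = -1 with hs1
    set s2 := Finset.univ.filter fun g => M g * Y g = -1 with hs2
    set s := Finset.univ.filter fun g => X g * Y g = -1 with hs
    have hsub1 : s1 ⊆ s := by
      intro g hg
      rw [hs1, Finset.mem_filter] at hg
      rw [hs, Finset.mem_filter]
      exact ⟨Finset.mem_univ g, sg7 _ _ _ (hXs g) (hMXY g) hg.2⟩
    have hdiff : s2 = s \ s1 := by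
      ext g
      rw [hs1, hs2, hs, Finset.mem_sdiff, Finset.mem_filter, Finset.mem_filter,
        Finset.mem_filter]
      constructor
      · intro ⟨_, h⟩
        have := (sg6 _ _ _ (hXs g) (hYs g) (hMXY g)).mp h
        exact ⟨⟨Finset.mem_univ g, this.1⟩, fun hc => this.2 hc.2⟩
      · intro ⟨⟨_, h⟩, hns⟩
        refine ⟨Finset.mem_univ g, (sg6 _ _ _ (hXs g) (hYs g) (hMXY g)).mpr ⟨h, ?_⟩⟩
        exact fun hc => hns ⟨Finset.mem_univ g, hc⟩
    have ha1 : 1 ≤ s1.card := by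
      refine Finset.card_pos.mpr ⟨g₁, ?_⟩
      rw [hs1, Finset.mem_filter]
      have hMg : M g₁ = Y g₁ := (hMXY g₁).resolve_left hg₁
      exact ⟨Finset.mem_univ g₁, by rw [hMg]; exact hg₁s⟩
    have hb1 : 1 ≤ s2.card := by
      refine Finset.card_pos.mpr ⟨g₂, ?_⟩
      rw [hs2, Finset.mem_filter]
      exact ⟨Finset.mem_univ g₂, by rw [hg₂]; exact hg₂s⟩
    have hscard : s.card = m + 2 := hcard
    have hab : s1.card + s2.card = m + 2 := by
      rw [hdiff, Finset.card_sdiff_of_subset hsub1, hscard]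
      have := Finset.card_le_card hsub1
      omega
    have ha : s1.card < m + 2 := by omega
    have hb : s2.card < m + 2 := by omega
    obtain ⟨P₁, h10, h1a, h1t, h1adj⟩ := IH s1.card ha X M hX hM rfl
    obtain ⟨P₂, h20, h2b, h2t, h2adj⟩ := IH s2.card hb M Y hM hY rfl
    obtain ⟨P, key1, key2⟩ := concat P₁ P₂ s1.card s2.card (by rw [h1a, h20])
    refine ⟨P, ?_, ?_, ?_, ?_⟩
    · rw [key1 0 (Nat.zero_le _), h10]
    · have : P (s1.card + s2.card) = P₂ s2.card := key2 s2.card le_rfl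
      rw [hab] at this
      rw [this, h2b]
    · intro i hi
      by_cases hia : i ≤ s1.card
      · rw [key1 i hia]; exact h1t i hia
      · have e1 : P i = P₂ (i - s1.card) := by
          have := key2 (i - s1.card) (by omega)
          rwa [show s1.card + (i - s1.card) = i by omega] at this
        rw [e1]
        exact h2t _ (by omega)
    · intro i hi
      by_cases hia : i + 1 ≤ s1.card
      · rw [key1 i (by omega), key1 (i + 1) hia]
        exact h1adj i (by omega)
      · have e1 : P i = P₂ (i - s1.card) := by
          have := key2 (i - s1.card) (by omega)
          rwa [show s1.card + (i - s1.card) = i by omega] at this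
        have e2 : P (i + 1) = P₂ (i - s1.card + 1) := by
          have := key2 (i - s1.card + 1) (by omega)
          rwa [show s1.card + (i - s1.card + 1) = i + 1 by omega] at this
        rw [e1, e2]
        exact h2adj (i - s1.card) (by omega)

end Aux

/-- in a semisimple strong elimination system, any two topes are
connected in the tope graph by a path whose length is the size of their separator
(the Hamming distance between them). -/
theorem tope_graph_partial_cube {E : Type*} [Fintype E] [DecidableEq E]
    (L : Set (E → SignType)) (hne : L.Nonempty) (hC : CompClosed L) (hSE : SE L)
    (hss : Semisimple L) (X Y : E → SignType)
    (hX : IsTope L X) (hY : IsTope L Y) :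
    ∃ P : ℕ → (E → SignType),
      P 0 = X ∧
      P ((Finset.univ.filter fun e => X e * Y e = -1).card) = Y ∧
      (∀ i ≤ (Finset.univ.filter fun e => X e * Y e = -1).card, IsTope L (P i)) ∧
      (∀ i < (Finset.univ.filter fun e => X e * Y e = -1).card,
        (Finset.univ.filter fun e => P i e ≠ P (i + 1) e).card = 1) := by
  exact key L hC hSE hss _ X Y hX hY rfl
end

section
/- If a set K of sign vectors satisfies weak elimination (WE), then its upset ↑K in the sign ordering satisfies (WE) as well; consequently (E, ↑K) is a lopsided system. -/
/-- Weak elimination (WE). -/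
def WE {E : Type*} (L : Set (E → SignType)) : Prop :=
  ∀ X ∈ L, ∀ Y ∈ L, ∀ e ∈ sep X Y,
    ∃ Z ∈ L, Z e = 0 ∧ {g | Z g = 1} ⊆ {g | X g = 1} ∪ {g | Y g = 1} ∧
      {g | Z g = -1} ⊆ {g | X g = -1} ∪ {g | Y g = -1}


lemma sle_refl' {E : Type*} (X : E → SignType) : sle X X := fun _ => Or.inr rfl

lemma sle_trans' {E : Type*} {X Y Z : E → SignType} (h1 : sle X Y) (h2 : sle Y Z) :
    sle X Z := by
  intro e
  rcases h1 e with h | h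
  · exact Or.inl h
  · rcases h2 e with h' | h'
    · exact Or.inl (h.trans h')
    · exact Or.inr (h.trans h')

lemma mem_upset_self' {E : Type*} {K : Set (E → SignType)} {X : E → SignType}
    (hX : X ∈ K) : X ∈ upset K := ⟨X, hX, sle_refl' X⟩

lemma level_mono {E : Type*} {X X' : E → SignType} (h : sle X X') {c : SignType}
    (hc : c ≠ 0) : {g | X g = c} ⊆ {g | X' g = c} := by
  intro g hg
  rcases h g with h0 | he
  · exact absurd (hg.symm.trans h0) hc
  · exact he.symm.trans hg

lemma scomp_pos_s13 : ∀ (a b : SignType), ¬ a * b = -1 → (a = 1 ∨ b = 1) →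
    (if a = 0 then b else a) = 1 := by decide

lemma scomp_neg : ∀ (a b : SignType), ¬ a * b = -1 → (a = -1 ∨ b = -1) →
    (if a = 0 then b else a) = -1 := by decide

/-- if K satisfies (WE), then its upset satisfies (WE), and the
upset is a lopsided system (ideal composition plus strong elimination). -/
theorem upset_WE_lopsided {E : Type*} [Fintype E] (K : Set (E → SignType))
    (hWE : WE K) :
    WE (upset K) ∧ (upset (upset K) = upset K ∧ SE (upset K)) := by
  constructor
  · -- WE (upset K)
    rintro X' ⟨X, hX, hXle⟩ Y' ⟨Y, hY, hYle⟩ e he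
    rcases hXle e with hX0 | hXe
    · exact ⟨X, mem_upset_self' hX, hX0,
        fun g hg => Or.inl (level_mono hXle (by decide) hg),
        fun g hg => Or.inl (level_mono hXle (by decide) hg)⟩
    · rcases hYle e with hY0 | hYe
      · exact ⟨Y, mem_upset_self' hY, hY0,
          fun g hg => Or.inr (level_mono hYle (by decide) hg),
          fun g hg => Or.inr (level_mono hYle (by decide) hg)⟩
      · have heK : e ∈ sep X Y := by
          simpa [sep, hXe, hYe] using he
        obtain ⟨Z, hZ, hZe, hZp, hZn⟩ := hWE X hX Y hY e heK
        refine ⟨Z, mem_upset_self' hZ, hZe, ?_, ?_⟩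
        · intro g hg
          rcases hZp hg with h | h
          · exact Or.inl (level_mono hXle (by decide) h)
          · exact Or.inr (level_mono hYle (by decide) h)
        · intro g hg
          rcases hZn hg with h | h
          · exact Or.inl (level_mono hXle (by decide) h)
          · exact Or.inr (level_mono hYle (by decide) h)
  constructor
  · -- idempotence of upset
    ext Z
    constructor
    · rintro ⟨Y, ⟨X, hX, hXY⟩, hYZ⟩
      exact ⟨X, hX, sle_trans' hXY hYZ⟩
    · intro hZ
      exact ⟨Z, hZ, sle_refl' Z⟩
  · -- SE (upset K)
    intro X' hX' Y' hY' e he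
    -- first get weak elimination in the upset
    have hWEup : ∀ X ∈ upset K, ∀ Y ∈ upset K, ∀ e ∈ sep X Y,
        ∃ Z ∈ upset K, Z e = 0 ∧ {g | Z g = 1} ⊆ {g | X g = 1} ∪ {g | Y g = 1} ∧
          {g | Z g = -1} ⊆ {g | X g = -1} ∪ {g | Y g = -1} := by
      rintro A ⟨X, hX, hXle⟩ B ⟨Y, hY, hYle⟩ f hf
      rcases hXle f with hX0 | hXe
      · exact ⟨X, mem_upset_self' hX, hX0,
          fun g hg => Or.inl (level_mono hXle (by decide) hg),
          fun g hg => Or.inl (level_mono hXle (by decide) hg)⟩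
      · rcases hYle f with hY0 | hYe
        · exact ⟨Y, mem_upset_self' hY, hY0,
            fun g hg => Or.inr (level_mono hYle (by decide) hg),
            fun g hg => Or.inr (level_mono hYle (by decide) hg)⟩
        · have hfK : f ∈ sep X Y := by simpa [sep, hXe, hYe] using hf
          obtain ⟨Z, hZ, hZe, hZp, hZn⟩ := hWE X hX Y hY f hfK
          refine ⟨Z, mem_upset_self' hZ, hZe, ?_, ?_⟩
          · intro g hg
            rcases hZp hg with h | h
            · exact Or.inl (level_mono hXle (by decide) h)
            · exact Or.inr (level_mono hYle (by decide) h)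
          · intro g hg
            rcases hZn hg with h | h
            · exact Or.inl (level_mono hXle (by decide) h)
            · exact Or.inr (level_mono hYle (by decide) h)
    obtain ⟨W, hW, hWe, hWp, hWn⟩ := hWEup X' hX' Y' hY' e he
    classical
    set Z : E → SignType := fun f => if X' f * Y' f = -1 then W f else scomp X' Y' f
      with hZdef
    obtain ⟨V, hV, hVW⟩ := hW
    refine ⟨Z, ⟨V, hV, sle_trans' hVW ?_⟩, ?_, ?_⟩
    · -- sle W Z
      intro f
      by_cases hsep : X' f * Y' f = -1
      · right; simp [hZdef, hsep]
      · cases hwf : W f with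
        | zero => exact Or.inl (by simp [hwf])
        | pos =>
          right
          have := hWp hwf
          simp only [Set.mem_setOf_eq, Set.mem_union] at this
          have : scomp X' Y' f = 1 := scomp_pos_s13 _ _ hsep this
          simp [hZdef, hsep, this, hwf]
        | neg =>
          right
          have := hWn hwf
          simp only [Set.mem_setOf_eq, Set.mem_union] at this
          have : scomp X' Y' f = -1 := scomp_neg _ _ hsep this
          simp [hZdef, hsep, this, hwf]
    · -- Z e = 0
      have : X' e * Y' e = -1 := he
      simp [hZdef, this, hWe]
    · -- agreement off the separator
      intro f hf
      have : ¬ X' f * Y' f = -1 := hf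
      simp [hZdef, this]
end

section
/- In a COM (E,L), the carrier N(L_e^0) = {X ∈ L : W ≤ X for some W ∈ L with W_e = 0} of a hyperplane satisfies composition (C) and face symmetry (FS). -/
/-- in a COM, the carrier of a hyperplane satisfies (C) and (FS). -/
theorem carrier_C_FS {E : Type*} [Fintype E] (L : Set (E → SignType)) (e : E)
    (h : IsCOM L) :
    CompClosed {X ∈ L | ∃ W ∈ L, W e = 0 ∧ sle W X} ∧
      FS {X ∈ L | ∃ W ∈ L, W e = 0 ∧ sle W X} := by
  obtain ⟨-, hFS, -⟩ := h
  have hC : CompClosed L := by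
    intro X hX Y hY
    have h1 : scomp X (fun f => -(Y f)) ∈ L := hFS X hX Y hY
    have h2 := hFS X hX _ h1
    have : scomp X (fun f => -(scomp X (fun g => -(Y g)) f)) = scomp X Y := by
      funext f
      simp only [scomp]
      by_cases hf : X f = 0 <;> simp [hf]
    rwa [this] at h2
  have hle : ∀ (W X Y : E → SignType), sle W X → sle W (scomp X Y) := by
    intro W X Y hWX f
    rcases hWX f with h0 | hXf
    · exact Or.inl h0
    · by_cases hf : X f = 0
      · exact Or.inl (hXf.trans hf)
      · right; rw [hXf]; simp [scomp, hf]
  constructor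
  · rintro X ⟨hX, W, hW, hWe, hWX⟩ Y ⟨hY, -⟩
    exact ⟨hC X hX Y hY, W, hW, hWe, hle W X Y hWX⟩
  · rintro X ⟨hX, W, hW, hWe, hWX⟩ Y ⟨hY, -⟩
    exact ⟨hFS X hX Y hY, W, hW, hWe, hle W X _ hWX⟩
end

section
/- Let (E,L) be the COM amalgam of two semisimple COMs (E,L') and (E,L''), i.e., L = L' ∪ L'' with L'∘L'' ⊆ L' and L''∘L' ⊆ L''. Then L satisfies composition (C) and face symmetry in the form (FS≤): for X ≤ Y in L, X∘(-Y) ∈ L. -/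
lemma fs_comp {E : Type*} {L : Set (E → SignType)} (hFS : FS L) :
    ∀ X ∈ L, ∀ Y ∈ L, scomp X Y ∈ L := by
  intro X hX Y hY
  have h1 := hFS X hX Y hY
  have h2 := hFS X hX _ h1
  have : scomp X (fun e => -(scomp X (fun e => -(Y e)) e)) = scomp X Y := by
    funext e
    simp only [scomp]
    by_cases h : X e = 0 <;> simp [h]
  rwa [this] at h2

lemma scomp_of_sle {E : Type*} {X Y : E → SignType} (h : sle X Y) :
    scomp X Y = Y := by
  funext e
  rcases h e with h0 | h0 <;> simp [scomp, h0]

/-- a COM amalgam of two semisimple COMs satisfies (C) and (FS≤). -/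
theorem amalgam_C_FSle {E : Type*} [Fintype E]
    (L' L'' L : Set (E → SignType))
    (h' : IsCOM L') (h'' : IsCOM L'')
    (hs' : Semisimple L') (hs'' : Semisimple L'')
    (hL : L = L' ∪ L'')
    (h1 : ∀ X ∈ L', ∀ Y ∈ L'', scomp X Y ∈ L')
    (h2 : ∀ X ∈ L'', ∀ Y ∈ L', scomp X Y ∈ L'') :
    CompClosed L ∧
      (∀ X ∈ L, ∀ Y ∈ L, sle X Y → scomp X (fun e => -(Y e)) ∈ L) := by
  subst hL
  constructor
  · rintro X (hX | hX) Y (hY | hY)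
    · exact Or.inl (fs_comp h'.2.1 X hX Y hY)
    · exact Or.inl (h1 X hX Y hY)
    · exact Or.inr (h2 X hX Y hY)
    · exact Or.inr (fs_comp h''.2.1 X hX Y hY)
  · rintro X (hX | hX) Y (hY | hY) hle
    · exact Or.inl (h'.2.1 X hX Y hY)
    · have : Y ∈ L' := scomp_of_sle hle ▸ h1 X hX Y hY
      exact Or.inl (h'.2.1 X hX Y this)
    · have : Y ∈ L'' := scomp_of_sle hle ▸ h2 X hX Y hY
      exact Or.inr (h''.2.1 X hX Y this)
    · exact Or.inr (h''.2.1 X hX Y hY)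
end

section
/- The set of sign vectors of a benzenoid-type example is not lopsided in general: concretely, there exists a set L of sign vectors on a 3-element ground set (the barycenters and vertices of a non-isometric induced path of length 4 in the 3-cube) such that L satisfies the Euler–Poincaré formula for zero sets, Σ_{X∈L} (-1)^{#X⁰} = 1, together with the tope-determination property X ∈ L ⇒ X∘Y ∈ L for all Y ∈ {±1}^E, yet L is not a lopsided system, showing that in Wiedemann's characterization one cannot drop the quantification over all topal fibers. -/
/-- there is a set of sign vectors on a 3-element ground set which
satisfies the Euler-Poincare formula for zero sets and the tope-determination
property, but is not a lopsided system. -/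
theorem euler_not_sufficient_for_lopsided :
    ∃ L : Finset (Fin 3 → SignType),
      (∑ X ∈ L, (-1 : ℤ) ^ (Finset.univ.filter fun e => X e = 0).card = 1) ∧
      (∀ X ∈ L, ∀ Y : Fin 3 → SignType, (∀ e, Y e ≠ 0) → scomp X Y ∈ L) ∧
      ¬ (upset (L : Set (Fin 3 → SignType)) = (L : Set (Fin 3 → SignType)) ∧
          SE (L : Set (Fin 3 → SignType))) := by
  classical
  refine ⟨{![-1,-1,-1], ![1,-1,-1], ![1,1,-1], ![1,1,1], ![-1,1,1],
            ![0,-1,-1], ![1,0,-1], ![1,1,0], ![0,1,1]}, by decide, by decide, ?_⟩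
  rintro ⟨-, hse⟩
  have hsep : (1 : Fin 3) ∈ sep (![-1,-1,-1] : Fin 3 → SignType) ![-1,1,1] := by
    simp [sep]
  obtain ⟨Z, hZ, hZ1, hZf⟩ := hse ![-1,-1,-1] (by decide) ![-1,1,1] (by decide) 1 hsep
  have h0 : (0 : Fin 3) ∉ sep (![-1,-1,-1] : Fin 3 → SignType) ![-1,1,1] := by
    simp [sep]
  simp only [Finset.coe_insert, Set.mem_insert_iff, Finset.coe_singleton,
    Set.mem_singleton_iff] at hZ
  rcases hZ with h|h|h|h|h|h|h|h|h <;> subst h <;>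
    first
    | exact absurd hZ1 (by decide)
    | exact absurd (hZf 0 h0) (by decide)
end
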